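/- arXiv:2003.10499 — 2 statements merged into one kernel-verified Lean document; each statement's English description precedes it below -/
import Mathlib

section
/- Let X be a nonzero symmetric Temperley–Lieb object in a symmetric tensor category C over k, with structure maps α : 𝟙 → X ⊗ X and β : X ⊗ X → 𝟙. Then α is a monomorphism, β is an epimorphism, and the image of α equals the image of c_{X,X} − id_{X⊗X}; in particular α induces an isomorphism 𝟙 ≅ ∧²X. -/
/-!
Rigidity makes the unit simple once `End 𝟙 = k`. If `A ↪ 𝟙` and `𝟙 ↠ B` compose to zero, then
`A ⊗ B = 0`, since `A ◁ (𝟙 ↠ B)` is epi and `(A ↪ 𝟙) ▷ B` is mono. Applied to dual morphisms,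
this shows that for `K ↪ 𝟙` with cokernel `Q`, the subobjects `K` and `Q^∨ ↪ 𝟙^∨ = 𝟙` intersect
in zero and together cover `𝟙`, so `𝟙 ≅ K ⊕ Q^∨`; as `End 𝟙 = k` has no nontrivial idempotents,
`K = 0` or `Q = 0`. As `X ≠ 0`, the zig-zag identities make `α` and `β` nonzero, so `α` is mono
out of the simple object `𝟙` and `β` is epi onto it. Finally `c - id = α ∘ β` is an epi followed
by a mono, so its image is `𝟙`, embedded by `α`.
-/

open CategoryTheory CategoryTheory.Limits CategoryTheory.MonoidalCategory

universe v u w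

/-- An object `L` of a monoidal category is invertible if `L ⊗ L' ≅ 𝟙` for some `L'`. -/
def IsInvertibleObj {C : Type u} [Category.{v} C] [MonoidalCategory C] (L : C) : Prop :=
  ∃ L' : C, Nonempty (L ⊗ L' ≅ 𝟙_ C)

/-- An invertible object `L` of a braided category is *even* if the braiding on `L ⊗ L` is
the identity. -/
def IsEvenInvertibleObj {C : Type u} [Category.{v} C] [MonoidalCategory C]
    [BraidedCategory C] (L : C) : Prop :=
  IsInvertibleObj L ∧ (β_ L L).hom = 𝟙 (L ⊗ L)

namespace CategoryTheory

section Whiskering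

variable {C : Type u} [Category.{v} C] [MonoidalCategory C]

instance mono_whiskerLeft (Z : C) [HasRightDual Z] {A B : C} (f : A ⟶ B) [Mono f] :
    Mono (Z ◁ f) :=
  have := Functor.preservesMonomorphisms_of_adjunction (tensorLeftAdjunction Z Zᘁ)
  (tensorLeft Z).map_mono f

instance epi_whiskerLeft (Z : C) [HasLeftDual Z] {A B : C} (f : A ⟶ B) [Epi f] :
    Epi (Z ◁ f) :=
  have := Functor.preservesEpimorphisms_of_adjunction (tensorLeftAdjunction (ᘁZ) Z)
  (tensorLeft Z).map_epi f

instance mono_whiskerRight {A B : C} (f : A ⟶ B) [Mono f] (Z : C) [HasLeftDual Z] :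
    Mono (f ▷ Z) :=
  have := Functor.preservesMonomorphisms_of_adjunction (tensorRightAdjunction (ᘁZ) Z)
  (tensorRight Z).map_mono f

instance epi_whiskerRight {A B : C} (f : A ⟶ B) [Epi f] (Z : C) [HasRightDual Z] :
    Epi (f ▷ Z) :=
  have := Functor.preservesEpimorphisms_of_adjunction (tensorRightAdjunction Z Zᘁ)
  (tensorRight Z).map_epi f

end Whiskering

namespace ExactPairing

variable {C : Type u} [Category.{v} C] [Preadditive C] [MonoidalCategory C]
  [MonoidalPreadditive C] {X Y : C} [ExactPairing X Y]

lemma isZero_of_coevaluation_eq_zero (h : η_ X Y = 0) : IsZero X := by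
  have zigzag := evaluation_coevaluation X Y
  rw [h, MonoidalPreadditive.zero_whiskerRight, zero_comp] at zigzag
  rw [IsZero.iff_id_eq_zero]
  simpa using (λ_ X).inv ≫= zigzag.symm =≫ (ρ_ X).hom

lemma isZero_of_evaluation_eq_zero (h : ε_ X Y = 0) : IsZero X := by
  have zigzag := evaluation_coevaluation X Y
  rw [h, MonoidalPreadditive.whiskerLeft_zero, comp_zero, comp_zero] at zigzag
  rw [IsZero.iff_id_eq_zero]
  simpa using (λ_ X).inv ≫= zigzag.symm =≫ (ρ_ X).hom

lemma isZero_of_isZero_tensor (h : IsZero (X ⊗ Y)) : IsZero X :=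
  isZero_of_coevaluation_eq_zero (h.eq_of_tgt _ _)

lemma isZero_of_isZero_tensor_swap (h : IsZero (Y ⊗ X)) : IsZero X :=
  isZero_of_evaluation_eq_zero (h.eq_of_src _ _)

lemma isZero_left_of_isZero_right (h : IsZero Y) : IsZero X :=
  isZero_of_isZero_tensor ((tensorLeft X).map_isZero h)

end ExactPairing

section Duals

variable {C : Type u} [Category.{v} C] [Preadditive C] [MonoidalCategory C]

lemma isZero_tensor_of_mono_left {A A' B : C} [HasLeftDual B] (i : A' ⟶ A) [Mono i]
    (h : IsZero (A ⊗ B)) : IsZero (A' ⊗ B) :=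
  h.of_mono (i ▷ B)

lemma isZero_tensor_of_epi_right {A B B' : C} [HasLeftDual A] (p : B ⟶ B') [Epi p]
    (h : IsZero (A ⊗ B)) : IsZero (A ⊗ B') :=
  h.of_epi (A ◁ p)

lemma isZero_tensor_of_mono_comp_epi_eq_zero {A B : C} [HasLeftDual A] [HasLeftDual B]
    (m : A ⟶ 𝟙_ C) (e : 𝟙_ C ⟶ B) [Mono m] [Epi e] (h : m ≫ e = 0) : IsZero (A ⊗ B) := by
  have hcomp : A ◁ e ≫ m ▷ B = 0 := by
    rw [whisker_exchange, whiskerRight_id, id_whiskerLeft, unitors_equal]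
    simp [reassoc_of% h]
  exact IsZero.of_mono_eq_zero _ (zero_of_epi_comp (A ◁ e) hcomp)

variable [MonoidalPreadditive C]

lemma coevaluation_comp_whiskerLeft_eq_zero_iff {Y Y' Z : C} [ExactPairing Y Y'] (t : Y' ⟶ Z) :
    η_ Y Y' ≫ Y ◁ t = 0 ↔ t = 0 := by
  refine ⟨fun h => ?_, fun h => by simp [h]⟩
  have h' := congrArg (tensorLeftHomEquiv (𝟙_ C) Y Y' Z).symm h
  rw [tensorLeftHomEquiv_symm_coevaluation_comp_whiskerLeft] at h'
  simpa [tensorLeftHomEquiv] using h'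

lemma whiskerRight_comp_evaluation_eq_zero_iff {X Z : C} [HasRightDual X] (t : Z ⟶ Xᘁ) :
    t ▷ X ≫ ε_ X Xᘁ = 0 ↔ t = 0 := by
  refine ⟨fun h => ?_, fun h => by simp [h]⟩
  have h' := congrArg (tensorRightHomEquiv Z X Xᘁ (𝟙_ C)) h
  rw [tensorRightHomEquiv_whiskerRight_comp_evaluation] at h'
  simpa [tensorRightHomEquiv] using h'

variable [LeftRigidCategory C]

lemma epi_rightAdjointMate {A B : C} [HasRightDual A] [HasRightDual B] (f : A ⟶ B) [Mono f] :
    Epi (fᘁ) := by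
  refine Preadditive.epi_of_cancel_zero _ fun {Z} t ht => ?_
  rw [← coevaluation_comp_whiskerLeft_eq_zero_iff (Y := A)]
  refine zero_of_comp_mono (f ▷ Z) ?_
  rw [Category.assoc, whisker_exchange, ← coevaluation_comp_rightAdjointMate_assoc,
    ← whiskerLeft_comp, ht]
  simp

lemma mono_rightAdjointMate {A B : C} [HasRightDual A] [HasRightDual B] (f : A ⟶ B) [Epi f] :
    Mono (fᘁ) := by
  refine Preadditive.mono_of_cancel_zero _ fun {Z} t ht => ?_
  rw [← whiskerRight_comp_evaluation_eq_zero_iff (X := B)]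
  refine zero_of_epi_comp (Z ◁ f) ?_
  rw [← Category.assoc, whisker_exchange, Category.assoc, ← rightAdjointMate_comp_evaluation,
    ← comp_whiskerRight_assoc, ht]
  simp

end Duals

section Biproducts

variable {C : Type u} [Category.{v} C] [Preadditive C]

lemma mono_biprod_desc_of_isZero_pullback {A B Y : C} (f : A ⟶ Y) (g : B ⟶ Y)
    [HasBinaryBiproduct A B] [HasPullback f g] (hfg : IsZero (pullback f g)) :
    Mono (biprod.desc f g) := by
  refine Preadditive.mono_of_cancel_zero _ fun {Z} h hh => ?_
  have hsq : (h ≫ biprod.fst) ≫ f = (-(h ≫ biprod.snd)) ≫ g := by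
    rw [Preadditive.neg_comp, eq_neg_iff_add_eq_zero, Category.assoc, Category.assoc,
      ← Preadditive.comp_add, ← hh, biprod.desc_eq]
  have hl : pullback.lift _ _ hsq = 0 := hfg.eq_of_tgt _ _
  have h₁ : h ≫ biprod.fst = 0 := by simpa [hl] using (pullback.lift_fst _ _ hsq).symm
  have h₂ : h ≫ biprod.snd = 0 := by simpa [hl] using (pullback.lift_snd _ _ hsq).symm
  ext <;> simp [h₁, h₂]

lemma isZero_or_isZero_of_biprod_iso {k : Type w} [DivisionRing k] [Linear k C]
    {A B Y : C} [HasBinaryBiproduct A B] (hEnd : ∀ f : Y ⟶ Y, ∃ a : k, f = a • 𝟙 Y)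
    (φ : A ⊞ B ≅ Y) : IsZero A ∨ IsZero B := by
  obtain ⟨a, ha⟩ := hEnd (φ.inv ≫ biprod.fst ≫ biprod.inl ≫ φ.hom)
  have hl : biprod.inl ≫ φ.hom ≫ (a • 𝟙 Y) = biprod.inl ≫ φ.hom := by rw [← ha]; simp
  have hr : biprod.inr ≫ φ.hom ≫ (a • 𝟙 Y) = 0 := by rw [← ha]; simp
  simp only [Linear.comp_smul, Category.comp_id] at hl hr
  by_cases h : a = 0
  · left
    exact IsZero.of_mono_eq_zero biprod.inl (by simpa [h] using hl.symm)
  · right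
    exact IsZero.of_mono_eq_zero biprod.inr (by simpa [h] using hr)

end Biproducts

section Unit

variable {C : Type u} [Category.{v} C] [Abelian C] [MonoidalCategory C] [MonoidalPreadditive C]
  [RigidCategory C] {K : C} (κ : K ⟶ 𝟙_ C)

/-- `Q^∨ ↪ 𝟙` for `Q = cokernel κ`. The target is `𝟙_ C` because the instance
`hasRightDualUnit` makes `(𝟙_ C)ᘁ` literally `𝟙_ C`. -/
noncomputable def unitComplement : (cokernel κ)ᘁ ⟶ 𝟙_ C := (cokernel.π κ)ᘁ

instance : Mono (unitComplement κ) := mono_rightAdjointMate _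

lemma unitComplement_comp_rightAdjointMate : unitComplement κ ≫ κᘁ = 0 := by
  rw [unitComplement, ← comp_rightAdjointMate, cokernel.condition]
  simp [rightAdjointMate]

lemma isZero_pullback_unitComplement [Mono κ] : IsZero (pullback κ (unitComplement κ)) := by
  have : Epi (κᘁ) := epi_rightAdjointMate κ
  have : Epi ((pullback.fst κ (unitComplement κ))ᘁ) := epi_rightAdjointMate _
  have hR : IsZero (pullback κ (unitComplement κ) ⊗ Kᘁ) :=
    isZero_tensor_of_mono_comp_epi_eq_zero (pullback.fst _ _ ≫ κ) (κᘁ) (by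
      rw [pullback.condition, Category.assoc, unitComplement_comp_rightAdjointMate, comp_zero])
  exact ExactPairing.isZero_of_isZero_tensor
    (isZero_tensor_of_epi_right ((pullback.fst κ (unitComplement κ))ᘁ) hR)

lemma epi_biprod_desc_unitComplement : Epi (biprod.desc κ (unitComplement κ)) := by
  refine Preadditive.epi_of_isZero_cokernel _ ?_
  have hκ : κ ≫ cokernel.π (biprod.desc κ (unitComplement κ)) = 0 :=
    (biprod.inl_desc_assoc κ (unitComplement κ) _).symm.trans (by simp)
  have hj : unitComplement κ ≫ cokernel.π (biprod.desc κ (unitComplement κ)) = 0 :=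
    (biprod.inr_desc_assoc κ (unitComplement κ) _).symm.trans (by simp)
  have : Epi (cokernel.desc κ _ hκ) := epi_of_epi_fac (cokernel.π_desc _ _ _)
  have : Mono ((cokernel.desc κ _ hκ)ᘁ) := mono_rightAdjointMate _
  exact ExactPairing.isZero_of_isZero_tensor_swap
    (isZero_tensor_of_mono_left ((cokernel.desc κ _ hκ)ᘁ)
      (isZero_tensor_of_mono_comp_epi_eq_zero _ _ hj))

theorem simple_unit {k : Type w} [DivisionRing k] [Linear k C]
    (hEnd : ∀ f : 𝟙_ C ⟶ 𝟙_ C, ∃ a : k, f = a • 𝟙 (𝟙_ C)) (hU : ¬ IsZero (𝟙_ C)) :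
    Simple (𝟙_ C) where
  mono_isIso_iff_nonzero {K} κ _ := by
    refine ⟨fun _ h => hU (IsZero.of_epi_eq_zero κ h), fun hκ => ?_⟩
    have := mono_biprod_desc_of_isZero_pullback _ _ (isZero_pullback_unitComplement κ)
    have := epi_biprod_desc_unitComplement κ
    have := isIso_of_mono_of_epi (biprod.desc κ (unitComplement κ))
    rcases isZero_or_isZero_of_biprod_iso hEnd (asIso (biprod.desc κ (unitComplement κ)))
      with hK | hQ
    · exact absurd (hK.eq_of_src κ 0) hκ
    · have : Epi κ := Preadditive.epi_of_isZero_cokernel κ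
        (ExactPairing.isZero_left_of_isZero_right hQ)
      exact isIso_of_mono_of_epi κ

end Unit

end CategoryTheory

section

variable {k : Type w} [Field k] [IsAlgClosed k]
variable {C : Type u} [Category.{v} C] [Abelian C] [Linear k C]
  [MonoidalCategory C] [SymmetricCategory C]
  [MonoidalPreadditive C] [MonoidalLinear k C] [RigidCategory C]
  [∀ X Y : C, FiniteDimensional k (X ⟶ Y)]

theorem symmetric_TL_object_exteriorSquare_general
    (hEnd : ∀ f : 𝟙_ C ⟶ 𝟙_ C, ∃ a : k, f = a • 𝟙 (𝟙_ C))
    (X : C) [ExactPairing X X] (hX : ¬ IsZero X)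
    (hc : (β_ X X).hom = 𝟙 (X ⊗ X) + ε_ X X ≫ η_ X X) :
    Mono (η_ X X) ∧ Epi (ε_ X X) ∧
      imageSubobject (η_ X X) = imageSubobject ((β_ X X).hom - 𝟙 (X ⊗ X)) ∧
      Nonempty ((𝟙_ C) ≅ image ((β_ X X).hom - 𝟙 (X ⊗ X))) := by
  have hη : η_ X X ≠ 0 := mt (ExactPairing.isZero_of_coevaluation_eq_zero (Y := X)) hX
  have hε : ε_ X X ≠ 0 := mt (ExactPairing.isZero_of_evaluation_eq_zero (Y := X)) hX
  have hU : ¬ IsZero (𝟙_ C) := fun h => hη (h.eq_of_src _ _)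
  have := simple_unit hEnd hU
  have : Mono (η_ X X) := mono_of_nonzero_from_simple hη
  have : Epi (ε_ X X) := epi_of_nonzero_to_simple hε
  have := strongEpi_of_epi (ε_ X X)
  have hd : ε_ X X ≫ η_ X X = (β_ X X).hom - 𝟙 (X ⊗ X) := by rw [hc]; abel
  let φ := image.isoStrongEpiMono (ε_ X X) (η_ X X) hd
  refine ⟨inferInstance, inferInstance, ?_, ⟨φ⟩⟩
  rw [imageSubobject_mono]
  exact Subobject.mk_eq_of_comm _ (φ ≪≫ (imageSubobjectIso _).symm) (by simp [φ])

/-- Let `X` be a nonzero symmetric Temperley–Lieb object: `X` is self-dual via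
`α = η_ X X : 𝟙 ⟶ X ⊗ X` and `β = ε_ X X : X ⊗ X ⟶ 𝟙` (an exact pairing), with
`β ∘ α = -2` and `c_{X,X} = id + α ∘ β`. Then `α` is a monomorphism, `β` is an epimorphism,
the image of `α` equals the image of `c_{X,X} - id`, and in particular `α` induces an
isomorphism `𝟙 ≅ ∧²X`. -/
theorem symmetric_TL_object_exteriorSquare
    (hNoeth : ∀ X : C, IsNoetherianObject X) (hArt : ∀ X : C, IsArtinianObject X)
    (hEnd : ∀ f : 𝟙_ C ⟶ 𝟙_ C, ∃ a : k, f = a • 𝟙 (𝟙_ C))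
    (X : C) [ExactPairing X X] (hX : ¬ IsZero X)
    (hβα : η_ X X ≫ ε_ X X = (-2 : k) • 𝟙 (𝟙_ C))
    (hc : (β_ X X).hom = 𝟙 (X ⊗ X) + ε_ X X ≫ η_ X X) :
    Mono (η_ X X) ∧ Epi (ε_ X X) ∧
      imageSubobject (η_ X X) = imageSubobject ((β_ X X).hom - 𝟙 (X ⊗ X)) ∧
      Nonempty ((𝟙_ C) ≅ image ((β_ X X).hom - 𝟙 (X ⊗ X))) :=
  symmetric_TL_object_exteriorSquare_general hEnd X hX hc

end
end

section
/- Let p be an odd prime and set Z_{ab} := Y_{ab} + Y_{ba}. Define p×p matrices with rows and columns indexed by 0,…,p−1: A_{ij} = δ_{i,j−1} + δ_{i,j+1}, B_{ij} = δ_{i+j,p−1} + δ_{i+j,p+1}, S_{ij} = δ_{i+j,p}, and D = diag(1,2,2,…,2). Then: (base case, m = 1-digit numbers a, b ∈ [1, p−1]) X_{ab} = δ_{ab} and Z_{ab} = A_{ab}; and for m ≥ 1 and a = p·a' + a_0, b = p·b' + b_0 with p^m ≤ a, b < p^{m+1} and a_0, b_0 ∈ [0, p−1]: X_{ab} = D_{a_0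 b_0}·X_{a'b'} + S_{a_0 b_0}·Z_{a'b'} and Z_{ab} = 2·A_{a_0 b_0}·X_{a'b'} + B_{a_0 b_0}·Z_{a'b'}. -/
/-- For `p^m ≤ a < p^(m+1)` with base-`p` expansion `a = Σ_{i=0}^m a_i p^i` (so `a_m ≠ 0`),
the set of descendants of `a` is
`Desc(a) = { a_m p^m + Σ_{i=0}^{m-1} ε_i a_i p^i : ε_i ∈ {1, -1} } ⊆ ℤ`. -/
def Desc (p m a : ℕ) : Set ℤ :=
  {d | ∃ ε : ℕ → ℤ, (∀ i, ε i = 1 ∨ ε i = -1) ∧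
    d = ((a / p ^ m : ℕ) : ℤ) * (p : ℤ) ^ m +
      ∑ i ∈ Finset.range m, ε i * (((a / p ^ i % p : ℕ) : ℤ) * (p : ℤ) ^ i)}

/-- `X_{ab}` is the number of common descendants of `a` and `b`. -/
noncomputable def Xcard (p m a b : ℕ) : ℕ := (Desc p m a ∩ Desc p m b).ncard

/-- `Y_{ab}` is the number of descendants `d` of `a` such that `d - 1` is a descendant of `b`. -/
noncomputable def Ycard (p m a b : ℕ) : ℕ := {d ∈ Desc p m a | d - 1 ∈ Desc p m b}.ncard


/-- `Z_{ab} = Y_{ab} + Y_{ba}`. -/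
noncomputable def Zcard (p m a b : ℕ) : ℕ := Ycard p m a b + Ycard p m b a

/-- The `p × p` matrix `A` with `A_{ij} = δ_{i,j-1} + δ_{i,j+1}`. -/
def Amat (i j : ℕ) : ℕ := (if i + 1 = j then 1 else 0) + (if i = j + 1 then 1 else 0)

/-- The `p × p` matrix `B` with `B_{ij} = δ_{i+j,p-1} + δ_{i+j,p+1}`. -/
def Bmat (p i j : ℕ) : ℕ := (if i + j = p - 1 then 1 else 0) + (if i + j = p + 1 then 1 else 0)

/-- The `p × p` matrix `S` with `S_{ij} = δ_{i+j,p}`. -/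
def Smat (p i j : ℕ) : ℕ := if i + j = p then 1 else 0

/-- The `p × p` matrix `D = diag(1,2,2,…,2)`. -/
def Dmat (i j : ℕ) : ℕ := if i = j then (if i = 0 then 1 else 2) else 0

lemma desc_zero (p a : ℕ) : Desc p 0 a = {(a : ℤ)} := by
  ext x
  constructor
  · rintro ⟨ε, -, rfl⟩; simp
  · rintro rfl
    exact ⟨fun _ => 1, fun _ => Or.inl rfl, by simp⟩

lemma desc_sum_succ (p m a : ℕ) (ε : ℕ → ℤ) :
    (↑(a / p ^ (m+1)) : ℤ) * (p:ℤ) ^ (m+1) +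
      ∑ i ∈ Finset.range (m+1), ε i * (↑(a / p ^ i % p) * (p:ℤ) ^ i)
    = (p:ℤ) * ((↑(a / p / p ^ m) : ℤ) * (p:ℤ) ^ m +
        ∑ j ∈ Finset.range m, ε (j+1) * (↑(a / p / p ^ j % p) * (p:ℤ) ^ j))
      + ε 0 * ↑(a % p) := by
  have hdiv : ∀ j : ℕ, a / p ^ (j+1) = (a / p) / p ^ j := fun j => by
    rw [Nat.div_div_eq_div_mul, ← pow_succ']
  rw [Finset.sum_range_succ']
  simp only [hdiv]
  simp only [pow_zero, Nat.div_one, mul_one]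
  rw [mul_add, Finset.mul_sum]
  rw [Finset.sum_congr rfl (fun j _ => by rw [pow_succ] ; ring :
    ∀ j ∈ Finset.range m, ε (j+1) * (↑(a/p/p^j % p) * (p:ℤ)^(j+1))
      = (p:ℤ) * (ε (j+1) * ((↑(a/p/p^j % p):ℤ) * (p:ℤ)^j)))]
  rw [pow_succ]
  ring

lemma desc_succ (p m a : ℕ) :
    Desc p (m+1) a =
      (fun d => (p:ℤ) * d + ((a % p : ℕ) : ℤ)) '' Desc p m (a / p) ∪
      (fun d => (p:ℤ) * d + (-((a % p : ℕ) : ℤ))) '' Desc p m (a / p) := by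
  ext x
  constructor
  · rintro ⟨ε, hε, rfl⟩
    have hx := desc_sum_succ p m a ε
    rcases hε 0 with h0 | h0
    · left
      refine ⟨(↑(a / p / p ^ m) : ℤ) * (p:ℤ) ^ m +
          ∑ j ∈ Finset.range m, ε (j+1) * (↑(a / p / p ^ j % p) * (p:ℤ) ^ j),
        ⟨fun j => ε (j+1), fun j => hε (j+1), rfl⟩, ?_⟩
      rw [hx, h0]; ring
    · right
      refine ⟨(↑(a / p / p ^ m) : ℤ) * (p:ℤ) ^ m +
          ∑ j ∈ Finset.range m, ε (j+1) * (↑(a / p / p ^ j % p) * (p:ℤ) ^ j),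
        ⟨fun j => ε (j+1), fun j => hε (j+1), rfl⟩, ?_⟩
      rw [hx, h0]; ring
  · rintro (⟨d, ⟨ε, hε, rfl⟩, rfl⟩ | ⟨d, ⟨ε, hε, rfl⟩, rfl⟩)
    · refine ⟨fun i => match i with | 0 => 1 | j+1 => ε j,
        fun i => match i with | 0 => Or.inl rfl | j+1 => hε j, ?_⟩
      rw [desc_sum_succ]
      simp only []
      ring
    · refine ⟨fun i => match i with | 0 => -1 | j+1 => ε j,
        fun i => match i with | 0 => Or.inr rfl | j+1 => hε j, ?_⟩
      rw [desc_sum_succ]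
      simp only []
      ring

lemma desc_finite (p m a : ℕ) : (Desc p m a).Finite := by
  induction m generalizing a with
  | zero => rw [desc_zero]; exact Set.finite_singleton _
  | succ m ih => rw [desc_succ]; exact ((ih _).image _).union ((ih _).image _)

lemma shift_ncard {p : ℕ} (hp : 0 < p) (c : ℤ) (S : Set ℤ) :
    ((fun d => (p:ℤ) * d + c) '' S).ncard = S.ncard := by
  apply Set.ncard_image_of_injective
  intro x y h
  simp only [add_left_inj] at h
  exact mul_left_cancel₀ (by exact_mod_cast hp.ne' : (p:ℤ) ≠ 0) h

lemma sep_shift_eq {p : ℕ} (hp : 0 < p) {S S' : Set ℤ} (c c' t k : ℤ)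
    (h : c' - c + t = p * k) :
    {x ∈ (fun d => (p:ℤ)*d + c) '' S | x - t ∈ (fun d => (p:ℤ)*d + c') '' S'} =
      (fun d => (p:ℤ)*d + c) '' {d ∈ S | d - k ∈ S'} := by
  have hp0 : (p:ℤ) ≠ 0 := by exact_mod_cast hp.ne'
  ext x
  constructor
  · rintro ⟨⟨d, hd, rfl⟩, ⟨d', hd', he⟩⟩
    simp only at he
    have hd'' : d' = d - k := by
      have : (p:ℤ) * d' = (p:ℤ) * (d - k) := by linear_combination he - h
      exact mul_left_cancel₀ hp0 this
    exact ⟨d, ⟨hd, hd'' ▸ hd'⟩, rfl⟩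
  · rintro ⟨d, ⟨hd, hd'⟩, rfl⟩
    exact ⟨⟨d, hd, rfl⟩, ⟨d - k, hd', by simp only []; linear_combination h⟩⟩

lemma sep_shift_empty {p : ℕ} {S S' : Set ℤ} (c c' t : ℤ)
    (h : ¬ ((p:ℤ) ∣ c' - c + t)) :
    {x ∈ (fun d => (p:ℤ)*d + c) '' S | x - t ∈ (fun d => (p:ℤ)*d + c') '' S'} = ∅ := by
  ext x
  simp only [Set.mem_setOf_eq, Set.mem_empty_iff_false, iff_false, not_and]
  rintro ⟨d, hd, rfl⟩ ⟨d', hd', he⟩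
  simp only at he
  exact h ⟨d - d', by linear_combination he⟩

lemma inter_eq_sep (A B : Set ℤ) : A ∩ B = {x ∈ A | x - 0 ∈ B} := by
  ext x; simp [Set.mem_inter_iff]

lemma shift_disjoint {p : ℕ} {S S' : Set ℤ} (c c' : ℤ) (h : ¬ ((p:ℤ) ∣ c' - c)) :
    Disjoint ((fun d => (p:ℤ)*d + c) '' S) ((fun d => (p:ℤ)*d + c') '' S') := by
  rw [Set.disjoint_iff_inter_eq_empty, inter_eq_sep]
  exact sep_shift_empty _ _ _ (by simpa using h)

lemma sep_union_union (A B C D : Set ℤ) (t : ℤ) :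
    {x ∈ A ∪ B | x - t ∈ C ∪ D} =
      {x ∈ A | x - t ∈ C} ∪ {x ∈ A | x - t ∈ D} ∪
        ({x ∈ B | x - t ∈ C} ∪ {x ∈ B | x - t ∈ D}) := by
  ext x
  simp only [Set.mem_union, Set.mem_setOf_eq]
  tauto

lemma ncard_shiftY (Sa Sb : Set ℤ) :
    {d ∈ Sa | d + 1 ∈ Sb}.ncard = {d ∈ Sb | d - 1 ∈ Sa}.ncard := by
  have him : (fun d => d + 1) '' {d ∈ Sa | d + 1 ∈ Sb} = {d ∈ Sb | d - 1 ∈ Sa} := by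
    ext x
    constructor
    · rintro ⟨d, ⟨h1, h2⟩, rfl⟩; exact ⟨h2, by simpa⟩
    · rintro ⟨h1, h2⟩; exact ⟨x - 1, ⟨h2, by simpa using h1⟩, by simp⟩
  rw [← him, Set.ncard_image_of_injective _ (add_left_injective 1)]

lemma not_dvd_helper {q c : ℤ} (hq : 0 < q) (h1 : -(2*q) < c) (h2 : c < 2*q)
    (h3 : c ≠ -q) (h4 : c ≠ 0) (h5 : c ≠ q) : ¬ q ∣ c := by
  rintro ⟨k, rfl⟩
  have hk1 : -2 < k := by nlinarith
  have hk2 : k < 2 := by nlinarith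
  interval_cases k <;> omega

lemma Yrec {p : ℕ} (hp : p.Prime) (ho : Odd p) (k a b : ℕ) :
    Ycard p (k+1) a b =
      Amat (a % p) (b % p) * Xcard p k (a / p) (b / p) +
        (if a % p + b % p = p - 1 then 1 else 0) * Ycard p k (a / p) (b / p) +
        (if a % p + b % p = p + 1 then 1 else 0) * Ycard p k (b / p) (a / p) := by
  obtain ⟨t, ht⟩ := ho
  have hp2 : 2 ≤ p := hp.two_le
  have hp0 : 0 < p := by omega
  have hq : (0:ℤ) < (p:ℤ) := by exact_mod_cast hp0
  show ({d ∈ Desc p (k+1) a | d - 1 ∈ Desc p (k+1) b}).ncard = _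
  rw [desc_succ p k a, desc_succ p k b, sep_union_union]
  set A := a % p with hAdef
  set B := b % p with hBdef
  set Sa := Desc p k (a / p) with hSa
  set Sb := Desc p k (b / p) with hSb
  have hA : A < p := Nat.mod_lt _ hp0
  have hB : B < p := Nat.mod_lt _ hp0
  have hX : Xcard p k (a/p) (b/p) = (Sa ∩ Sb).ncard := by rw [hSa, hSb]; rfl
  have hY1 : Ycard p k (a/p) (b/p) = {d ∈ Sa | d - 1 ∈ Sb}.ncard := by rw [hSa, hSb]; rfl
  have hY2 : Ycard p k (b/p) (a/p) = {d ∈ Sb | d - 1 ∈ Sa}.ncard := by rw [hSa, hSb]; rfl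
  rw [hX, hY1, hY2]
  by_cases hC1 : A = B + 1
  · rw [sep_shift_empty (p := p) (-↑A) (↑B) 1
        (not_dvd_helper hq (by omega) (by omega) (by omega) (by omega) (by omega)),
      sep_shift_empty (p := p) (-↑A) (-↑B) 1
        (not_dvd_helper hq (by omega) (by omega) (by omega) (by omega) (by omega))]
    by_cases hB0 : B = 0
    · simp only [hB0, Nat.cast_zero, neg_zero]
      rw [sep_shift_eq hp0 (↑A) 0 1 0 (by omega)]
      simp only [Set.union_self, Set.union_empty, sub_zero, Set.sep_mem_eq]
      rw [shift_ncard hp0]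
      have hAm : Amat A 0 = 1 := by unfold Amat; rw [if_neg (by omega), if_pos (by omega)]
      rw [hAm, if_neg (by omega), if_neg (by omega)]
      ring
    · rw [sep_shift_eq hp0 (↑A) (↑B) 1 0 (by omega),
        sep_shift_empty (p := p) (↑A) (-↑B) 1
          (not_dvd_helper hq (by omega) (by omega) (by omega) (by omega) (by omega))]
      simp only [Set.union_empty, sub_zero, Set.sep_mem_eq]
      rw [shift_ncard hp0]
      have hAm : Amat A B = 1 := by unfold Amat; rw [if_neg (by omega), if_pos hC1]
      rw [hAm, if_neg (by omega), if_neg (by omega)]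
      ring
  · by_cases hC2 : B = A + 1
    · rw [sep_shift_empty (p := p) (↑A) (↑B) 1
          (not_dvd_helper hq (by omega) (by omega) (by omega) (by omega) (by omega)),
        sep_shift_empty (p := p) (-↑A) (↑B) 1
          (not_dvd_helper hq (by omega) (by omega) (by omega) (by omega) (by omega))]
      by_cases hA0 : A = 0
      · simp only [hA0, Nat.cast_zero, neg_zero]
        rw [sep_shift_eq hp0 0 (-↑B) 1 0 (by omega)]
        simp only [Set.union_self, Set.empty_union, sub_zero, Set.sep_mem_eq]
        rw [shift_ncard hp0]
        have hAm : Amat 0 B = 1 := by unfold Amat; rw [if_pos (by omega), if_neg (by omega)]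
        rw [hAm, if_neg (by omega), if_neg (by omega)]
        ring
      · rw [sep_shift_empty (p := p) (↑A) (-↑B) 1
            (not_dvd_helper hq (by omega) (by omega) (by omega) (by omega) (by omega)),
          sep_shift_eq hp0 (-↑A) (-↑B) 1 0 (by omega)]
        simp only [Set.empty_union, Set.union_empty, sub_zero, Set.sep_mem_eq]
        rw [shift_ncard hp0]
        have hAm : Amat A B = 1 := by unfold Amat; rw [if_pos (by omega), if_neg (by omega)]
        rw [hAm, if_neg (by omega), if_neg (by omega)]
        ring
    · by_cases hC3 : A + B = p - 1
      · rw [sep_shift_empty (p := p) (↑A) (-↑B) 1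
            (not_dvd_helper hq (by omega) (by omega) (by omega) (by omega) (by omega))]
        by_cases hA0 : A = 0
        · rw [sep_shift_empty (p := p) (-↑A) (-↑B) 1
              (not_dvd_helper hq (by omega) (by omega) (by omega) (by omega) (by omega))]
          simp only [hA0, Nat.cast_zero, neg_zero]
          rw [sep_shift_eq hp0 0 (↑B) 1 1 (by omega)]
          simp only [Set.union_self, Set.union_empty, Set.empty_union]
          rw [shift_ncard hp0]
          have hAm : Amat 0 B = 0 := by unfold Amat; rw [if_neg (by omega), if_neg (by omega)]
          rw [hAm, if_pos (by omega), if_neg (by omega)]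
          ring
        · by_cases hB0 : B = 0
          · simp only [hB0, Nat.cast_zero, neg_zero]
            rw [sep_shift_empty (p := p) (↑A) 0 1
                (not_dvd_helper hq (by omega) (by omega) (by omega) (by omega) (by omega))]
            rw [sep_shift_eq hp0 (-↑A) 0 1 1 (by omega)]
            simp only [Set.union_self, Set.union_empty, Set.empty_union]
            rw [shift_ncard hp0]
            have hAm : Amat A 0 = 0 := by unfold Amat; rw [if_neg (by omega), if_neg (by omega)]
            rw [hAm, if_pos (by omega), if_neg (by omega)]
            ring
          · rw [sep_shift_empty (p := p) (↑A) (↑B) 1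
                (not_dvd_helper hq (by omega) (by omega) (by omega) (by omega) (by omega)),
              sep_shift_empty (p := p) (-↑A) (-↑B) 1
                (not_dvd_helper hq (by omega) (by omega) (by omega) (by omega) (by omega)),
              sep_shift_eq hp0 (-↑A) (↑B) 1 1 (by omega)]
            simp only [Set.union_empty, Set.empty_union]
            rw [shift_ncard hp0]
            have hAm : Amat A B = 0 := by unfold Amat; rw [if_neg (by omega), if_neg (by omega)]
            rw [hAm, if_pos (by omega), if_neg (by omega)]
            ring
      · by_cases hC4 : A + B = p + 1
        · rw [sep_shift_empty (p := p) (↑A) (↑B) 1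
              (not_dvd_helper hq (by omega) (by omega) (by omega) (by omega) (by omega)),
            sep_shift_empty (p := p) (-↑A) (↑B) 1
              (not_dvd_helper hq (by omega) (by omega) (by omega) (by omega) (by omega)),
            sep_shift_empty (p := p) (-↑A) (-↑B) 1
              (not_dvd_helper hq (by omega) (by omega) (by omega) (by omega) (by omega)),
            sep_shift_eq hp0 (↑A) (-↑B) 1 (-1) (by omega)]
          simp only [Set.union_empty, Set.empty_union]
          rw [shift_ncard hp0]
          simp only [sub_neg_eq_add]
          rw [ncard_shiftY]
          have hAm : Amat A B = 0 := by unfold Amat; rw [if_neg (by omega), if_neg (by omega)]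
          rw [hAm, if_neg (by omega), if_pos (by omega)]
          ring
        · rw [sep_shift_empty (p := p) (↑A) (↑B) 1
              (not_dvd_helper hq (by omega) (by omega) (by omega) (by omega) (by omega)),
            sep_shift_empty (p := p) (↑A) (-↑B) 1
              (not_dvd_helper hq (by omega) (by omega) (by omega) (by omega) (by omega)),
            sep_shift_empty (p := p) (-↑A) (↑B) 1
              (not_dvd_helper hq (by omega) (by omega) (by omega) (by omega) (by omega)),
            sep_shift_empty (p := p) (-↑A) (-↑B) 1
              (not_dvd_helper hq (by omega) (by omega) (by omega) (by omega) (by omega))]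
          simp only [Set.union_empty, Set.ncard_empty]
          have hAm : Amat A B = 0 := by unfold Amat; rw [if_neg (by omega), if_neg (by omega)]
          rw [hAm, if_neg (by omega), if_neg (by omega)]
          ring

lemma Xrec {p : ℕ} (hp : p.Prime) (ho : Odd p) (k a b : ℕ) :
    Xcard p (k+1) a b =
      Dmat (a % p) (b % p) * Xcard p k (a / p) (b / p) +
        Smat p (a % p) (b % p) * Zcard p k (a / p) (b / p) := by
  obtain ⟨t, ht⟩ := ho
  have hp2 : 2 ≤ p := hp.two_le
  have hp0 : 0 < p := by omega
  have hq : (0:ℤ) < (p:ℤ) := by exact_mod_cast hp0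
  show (Desc p (k+1) a ∩ Desc p (k+1) b).ncard = _
  rw [desc_succ p k a, desc_succ p k b, inter_eq_sep, sep_union_union]
  set A := a % p with hAdef
  set B := b % p with hBdef
  set Sa := Desc p k (a / p) with hSa
  set Sb := Desc p k (b / p) with hSb
  have hA : A < p := Nat.mod_lt _ hp0
  have hB : B < p := Nat.mod_lt _ hp0
  have hX : Xcard p k (a/p) (b/p) = (Sa ∩ Sb).ncard := by rw [hSa, hSb]; rfl
  have hZ : Zcard p k (a/p) (b/p) =
      {d ∈ Sa | d - 1 ∈ Sb}.ncard + {d ∈ Sb | d - 1 ∈ Sa}.ncard := by rw [hSa, hSb]; rfl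
  rw [hX, hZ]
  have hfin1 : ({d ∈ Sa | d - 0 ∈ Sb}).Finite :=
    (desc_finite p k (a/p)).subset (Set.sep_subset _ _)
  have hfinY1 : ({d ∈ Sa | d - (-1) ∈ Sb}).Finite :=
    (desc_finite p k (a/p)).subset (Set.sep_subset _ _)
  have hfinY2 : ({d ∈ Sa | d - 1 ∈ Sb}).Finite :=
    (desc_finite p k (a/p)).subset (Set.sep_subset _ _)
  by_cases hD : A = B
  · by_cases hA0 : A = 0
    · simp only [← hD, hA0, Nat.cast_zero, neg_zero]
      rw [sep_shift_eq hp0 0 0 0 0 (by omega)]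
      simp only [Set.union_self, sub_zero, Set.sep_mem_eq]
      rw [shift_ncard hp0]
      have hDm : Dmat 0 0 = 1 := by unfold Dmat; rw [if_pos rfl, if_pos rfl]
      have hSm : Smat p 0 0 = 0 := by unfold Smat; rw [if_neg (by omega)]
      rw [hDm, hSm]
      ring
    · rw [sep_shift_eq hp0 (↑A) (↑B) 0 0 (by omega),
        sep_shift_empty (p := p) (↑A) (-↑B) 0
          (not_dvd_helper hq (by omega) (by omega) (by omega) (by omega) (by omega)),
        sep_shift_empty (p := p) (-↑A) (↑B) 0
          (not_dvd_helper hq (by omega) (by omega) (by omega) (by omega) (by omega)),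
        sep_shift_eq hp0 (-↑A) (-↑B) 0 0 (by omega)]
      simp only [Set.union_empty, Set.empty_union]
      rw [Set.ncard_union_eq
        (shift_disjoint (p := p) (↑A) (-↑A)
          (not_dvd_helper hq (by omega) (by omega) (by omega) (by omega) (by omega)))
        (hfin1.image _) (hfin1.image _)]
      rw [shift_ncard hp0, shift_ncard hp0]
      simp only [sub_zero, Set.sep_mem_eq]
      have hDm : Dmat A B = 2 := by unfold Dmat; rw [if_pos hD, if_neg hA0]
      have hSm : Smat p A B = 0 := by unfold Smat; rw [if_neg (by omega)]
      rw [hDm, hSm]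
      ring
  · by_cases hS : A + B = p
    · rw [sep_shift_empty (p := p) (↑A) (↑B) 0
          (not_dvd_helper hq (by omega) (by omega) (by omega) (by omega) (by omega)),
        sep_shift_empty (p := p) (-↑A) (-↑B) 0
          (not_dvd_helper hq (by omega) (by omega) (by omega) (by omega) (by omega)),
        sep_shift_eq hp0 (↑A) (-↑B) 0 (-1) (by omega),
        sep_shift_eq hp0 (-↑A) (↑B) 0 1 (by omega)]
      simp only [Set.union_empty, Set.empty_union]
      rw [Set.ncard_union_eq
        (shift_disjoint (p := p) (↑A) (-↑A)
          (not_dvd_helper hq (by omega) (by omega) (by omega) (by omega) (by omega)))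
        (hfinY1.image _) (hfinY2.image _)]
      rw [shift_ncard hp0, shift_ncard hp0]
      simp only [sub_neg_eq_add]
      rw [ncard_shiftY]
      have hDm : Dmat A B = 0 := by unfold Dmat; rw [if_neg hD]
      have hSm : Smat p A B = 1 := by unfold Smat; rw [if_pos hS]
      rw [hDm, hSm]
      ring
    · rw [sep_shift_empty (p := p) (↑A) (↑B) 0
          (not_dvd_helper hq (by omega) (by omega) (by omega) (by omega) (by omega)),
        sep_shift_empty (p := p) (↑A) (-↑B) 0
          (not_dvd_helper hq (by omega) (by omega) (by omega) (by omega) (by omega)),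
        sep_shift_empty (p := p) (-↑A) (↑B) 0
          (not_dvd_helper hq (by omega) (by omega) (by omega) (by omega) (by omega)),
        sep_shift_empty (p := p) (-↑A) (-↑B) 0
          (not_dvd_helper hq (by omega) (by omega) (by omega) (by omega) (by omega))]
      simp only [Set.union_empty, Set.ncard_empty]
      have hDm : Dmat A B = 0 := by unfold Dmat; rw [if_neg hD]
      have hSm : Smat p A B = 0 := by unfold Smat; rw [if_neg hS]
      rw [hDm, hSm]
      ring

lemma Xsymm (p m a b : ℕ) : Xcard p m b a = Xcard p m a b := by
  show (Desc p m b ∩ Desc p m a).ncard = _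
  rw [Set.inter_comm]
  rfl

lemma Zrec {p : ℕ} (hp : p.Prime) (ho : Odd p) (k a b : ℕ) :
    Zcard p (k+1) a b =
      2 * Amat (a % p) (b % p) * Xcard p k (a / p) (b / p) +
        Bmat p (a % p) (b % p) * Zcard p k (a / p) (b / p) := by
  show Ycard p (k+1) a b + Ycard p (k+1) b a = _
  rw [Yrec hp ho k a b, Yrec hp ho k b a, Xsymm p k (a/p) (b/p)]
  have h1 : Amat (b % p) (a % p) = Amat (a % p) (b % p) := by
    unfold Amat
    rw [Nat.add_comm]
    congr 1 <;> exact if_congr eq_comm rfl rfl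
  have h2 : b % p + a % p = a % p + b % p := Nat.add_comm _ _
  rw [h1, h2]
  simp only [Bmat, Zcard]
  ring

lemma Xbase (p a b : ℕ) : Xcard p 0 a b = if a = b then 1 else 0 := by
  show (Desc p 0 a ∩ Desc p 0 b).ncard = _
  rw [desc_zero, desc_zero]
  by_cases h : a = b
  · subst h; rw [if_pos rfl]; simp
  · rw [if_neg h, Set.singleton_inter_eq_empty.mpr (by simp; omega), Set.ncard_empty]

lemma Ybase (p a b : ℕ) : Ycard p 0 a b = if a = b + 1 then 1 else 0 := by
  show ({d ∈ Desc p 0 a | d - 1 ∈ Desc p 0 b}).ncard = _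
  rw [desc_zero, desc_zero]
  by_cases h : a = b + 1
  · rw [if_pos h]
    have he : {d ∈ ({((a:ℕ):ℤ)} : Set ℤ) | d - 1 ∈ ({((b:ℕ):ℤ)} : Set ℤ)} = {((a:ℕ):ℤ)} := by
      ext x
      simp only [Set.mem_singleton_iff, Set.mem_setOf_eq, and_iff_left_iff_imp]
      rintro rfl
      omega
    rw [he, Set.ncard_singleton]
  · rw [if_neg h]
    have he : {d ∈ ({((a:ℕ):ℤ)} : Set ℤ) | d - 1 ∈ ({((b:ℕ):ℤ)} : Set ℤ)} = ∅ := by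
      ext x
      simp only [Set.mem_singleton_iff, Set.mem_setOf_eq, Set.mem_empty_iff_false, iff_false,
        not_and]
      rintro rfl hh
      exact h (by omega)
    rw [he, Set.ncard_empty]

/-- Base case and recursion for the quantities `X` and `Z = Y + Yᵀ` in terms of the
matrices `A`, `B`, `S`, `D`. -/
theorem XZ_matrix_recursion {p : ℕ} (hp : p.Prime) (hodd : Odd p) :
    (∀ a b : ℕ, 1 ≤ a → a ≤ p - 1 → 1 ≤ b → b ≤ p - 1 →
      Xcard p 0 a b = (if a = b then 1 else 0) ∧ Zcard p 0 a b = Amat a b) ∧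
    (∀ m a b : ℕ, 1 ≤ m → p ^ m ≤ a → a < p ^ (m + 1) → p ^ m ≤ b → b < p ^ (m + 1) →
      Xcard p m a b =
        Dmat (a % p) (b % p) * Xcard p (m - 1) (a / p) (b / p) +
          Smat p (a % p) (b % p) * Zcard p (m - 1) (a / p) (b / p) ∧
      Zcard p m a b =
        2 * Amat (a % p) (b % p) * Xcard p (m - 1) (a / p) (b / p) +
          Bmat p (a % p) (b % p) * Zcard p (m - 1) (a / p) (b / p)) := by
  refine ⟨fun a b _ _ _ _ => ⟨Xbase p a b, ?_⟩, fun m a b hm _ _ _ _ => ?_⟩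
  · show Ycard p 0 a b + Ycard p 0 b a = _
    rw [Ybase, Ybase]
    unfold Amat
    have h3 : (if b = a + 1 then 1 else 0) = (if a + 1 = b then 1 else 0) :=
      if_congr eq_comm rfl rfl
    rw [h3]
    exact Nat.add_comm _ _
  · obtain ⟨k, rfl⟩ : ∃ k, m = k + 1 := ⟨m - 1, by omega⟩
    simp only [Nat.add_sub_cancel]
    exact ⟨Xrec hp hodd k a b, Zrec hp hodd k a b⟩
end
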